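/- Let p be an odd prime, u ∈ ℤ with p ∤ u, and M = diag(u,1) over ℤ/pℤ. For λ ∈ (ℤ/pℤ)^{2×2}, define G₂(λ) = Σ_{x symmetric over ℤ/pℤ, rank x = 2} e(tr(M ᵗλ x λ)/p). Then: (i) G₂(0) = p²(p−1); (ii) if rank λ = 2, G₂(λ) = −((−u)/p)·p; (iii) if rank λ = 1 with λ = (λ', t λ') and u + t² ≡ 0 mod p, G₂(λ) = p²(p−1); (iv) if rank λ = 1 with λ = (λ', tλ') and u+t² ≢ 0 mod p, or λ = (0, λ') with λ' ≠ 0, G₂(λ) = 0. -/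

import Mathlib

/-!
Write a symmetric matrix as `x = !![a, b; b, c]` and put `N = λ diag(u, 1) λᵀ`, so that the phase
`tr(x N) = N₀₀ a + 2 N₀₁ b + N₁₁ c` is a linear form in `(a, b, c)`. Over all of `𝔽_p³` its
character sum is `p³` or `0`. On the singular cone `ac = b²`, parametrised by `a` and `b = a s`,
it is `p` times (the number of projective zeros of `N₁₁ s² + 2 N₀₁ s + N₀₀`, minus 1), and that
number is `1 + χ(-4 det N)` with `χ` the quadratic character and `det N = u det(λ)²`. Hence
`G₂(λ) = p²(p - 1)` if `N = 0` and `-χ(-u det(λ)²) p` otherwise; the four cases only decide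
whether `N` vanishes and whether `λ` is invertible.
-/

open Matrix
open scoped Classical

/-- The rank-two Gauss sum
`G₂(λ) = Σ_{x symmetric, rank x = 2} e(tr(diag(u,1) ᵗλ x λ)/p)` over `ℤ/pℤ`. -/
noncomputable def rankTwoGaussSum (p : ℕ) [NeZero p] (u : ℤ)
    (lam : Matrix (Fin 2) (Fin 2) (ZMod p)) : ℂ :=
  ∑ x : Fin 2 → Fin 2 → ZMod p,
    if (Matrix.of x).IsSymm ∧ (Matrix.of x).rank = 2 then
      Complex.exp (2 * Real.pi * Complex.I *
        ((((Matrix.diagonal ![(u : ZMod p), 1] * lamᵀ * Matrix.of x * lam).trace).val : ℕ) : ℂ)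
          / (p : ℂ))
    else 0

open Finset

theorem Matrix.rank_eq_card_iff_det_ne_zero {K n : Type*} [Field K] [Fintype n] [DecidableEq n]
    (A : Matrix n n K) : A.rank = Fintype.card n ↔ A.det ≠ 0 := by
  refine ⟨fun h => ?_, rank_of_det_ne_zero⟩
  have hrange : LinearMap.range A.mulVecLin = ⊤ :=
    Submodule.eq_top_of_finrank_eq (by rw [← Matrix.rank, h, Module.finrank_fintype_fun_eq_card])
  have hsurj : Function.Surjective A.mulVec := LinearMap.range_eq_top.mp hrange
  exact ((isUnit_iff_isUnit_det A).mp (mulVec_surjective_iff_isUnit.mp hsurj)).ne_zero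

theorem Matrix.sum_ite_isSymm_fin_two {R M : Type*} [Fintype R] [DecidableEq R] [AddCommMonoid M]
    (f : Matrix (Fin 2) (Fin 2) R → M) :
    ∑ x : Matrix (Fin 2) (Fin 2) R, (if x.IsSymm then f x else 0)
      = ∑ a, ∑ b, ∑ c, f !![a, b; b, c] := by
  let e : (R × R) × (R × R) ≃ Matrix (Fin 2) (Fin 2) R :=
    ((finTwoArrowEquiv R).prodCongr (finTwoArrowEquiv R)).symm.trans
      ((finTwoArrowEquiv _).symm.trans of)
  have he (a b b' c : R) : e ((a, b), (b', c)) = !![a, b; b', c] := rfl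
  have hsymm (a b b' c : R) : (!![a, b; b', c]).IsSymm ↔ b' = b := by
    simp [IsSymm.ext_iff, Fin.forall_fin_two, eq_comm]
  rw [← e.sum_comp, Fintype.sum_prod_type]
  simp_rw [Fintype.sum_prod_type, he, hsymm]
  refine sum_congr rfl fun a _ => sum_congr rfl fun b _ => ?_
  rw [sum_comm]
  simp

theorem Matrix.trace_fin_two_mul_of_isSymm {R : Type*} [CommRing R] (a b c : R)
    {N : Matrix (Fin 2) (Fin 2) R} (hN : N.IsSymm) :
    trace (!![a, b; b, c] * N) = N 0 0 * a + 2 * N 0 1 * b + N 1 1 * c := by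
  rw [trace_fin_two, mul_apply, mul_apply, Fin.sum_univ_two, Fin.sum_univ_two, hN.apply 0 1]
  simp only [of_apply, cons_val', cons_val_zero, cons_val_one, cons_val_fin_one]
  ring

theorem Matrix.mul_diagonal_mul_transpose_fin_two_apply {R : Type*} [CommRing R] (u : R)
    (lam : Matrix (Fin 2) (Fin 2) R) (i j : Fin 2) :
    (lam * diagonal ![u, 1] * lamᵀ) i j = u * lam i 0 * lam j 0 + lam i 1 * lam j 1 := by
  rw [mul_apply, Fin.sum_univ_two, mul_diagonal, mul_diagonal, transpose_apply, transpose_apply,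
    cons_val_zero, cons_val_one, cons_val_zero]
  ring

theorem Matrix.mul_diagonal_mul_transpose_of_col_eq {R : Type*} [CommRing R] {u t : R}
    {lam : Matrix (Fin 2) (Fin 2) R} (ht : ∀ i, lam i 1 = t * lam i 0) :
    lam * diagonal ![u, 1] * lamᵀ
      = (u + t ^ 2) • vecMulVec (fun i => lam i 0) (fun i => lam i 0) := by
  ext i j
  rw [mul_diagonal_mul_transpose_fin_two_apply, ht i, ht j, smul_apply, vecMulVec_apply,
    smul_eq_mul]
  ring

theorem Matrix.mul_diagonal_mul_transpose_of_col_zero {R : Type*} [CommRing R] {u : R}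
    {lam : Matrix (Fin 2) (Fin 2) R} (hcol : ∀ i, lam i 0 = 0) :
    lam * diagonal ![u, 1] * lamᵀ = vecMulVec (fun i => lam i 1) (fun i => lam i 1) := by
  ext i j
  rw [mul_diagonal_mul_transpose_fin_two_apply, hcol i, vecMulVec_apply]
  ring

theorem Matrix.eq_zero_of_mul_diagonal_mul_transpose_eq_zero {R : Type*} [CommRing R]
    [IsDomain R] {u : R} {lam : Matrix (Fin 2) (Fin 2) R}
    (hcase : (∃ t, (∀ i, lam i 1 = t * lam i 0) ∧ u + t ^ 2 ≠ 0) ∨ ∀ i, lam i 0 = 0)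
    (h0 : lam * diagonal ![u, 1] * lamᵀ = 0) : lam = 0 := by
  rcases hcase with ⟨t, ht, hut⟩ | hcol
  · rw [mul_diagonal_mul_transpose_of_col_eq ht, smul_eq_zero, vecMulVec_eq_zero, or_self] at h0
    have hcol (i : Fin 2) : lam i 0 = 0 := congrFun (h0.resolve_left hut) i
    ext i j
    fin_cases j <;> simp [ht, hcol]
  · rw [mul_diagonal_mul_transpose_of_col_zero hcol, vecMulVec_eq_zero, or_self] at h0
    ext i j
    fin_cases j
    · simp [hcol]
    · simpa using congrFun h0 i

section QuadraticCount

variable {F : Type*} [Field F] [Fintype F] [DecidableEq F]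

theorem card_roots_quadratic (hF : ringChar F ≠ 2) {γ : F} (hγ : γ ≠ 0) (β α : F) :
    (#{s | γ * (s * s) + β * s + α = 0} : ℤ) = quadraticChar F (discrim γ β α) + 1 := by
  have : NeZero (2 : F) := ⟨Ring.two_ne_zero hF⟩
  rw [← quadraticChar_card_sqrts hF]
  congr 1
  refine card_bij (fun s _ => 2 * γ * s + β) (fun s hs => ?_) (fun s _ s' _ h => ?_) fun y hy => ?_
  · simp only [mem_filter, mem_univ, true_and, quadratic_eq_zero_iff_discrim_eq_sq hγ] at hs
    simp [hs]
  · exact mul_left_cancel₀ (mul_ne_zero two_ne_zero hγ) (add_right_cancel h)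
  · refine ⟨(y - β) / (2 * γ), ?_, by field_simp; ring⟩
    have hy' : 2 * γ * ((y - β) / (2 * γ)) + β = y := by field_simp; ring
    simp only [Set.mem_toFinset, Set.mem_ofPred_eq] at hy
    simp [quadratic_eq_zero_iff_discrim_eq_sq hγ, hy', hy]

/-- The left side counts the zeros of the binary form `γ s² + β s w + α w²` on the projective
line; the `if` accounts for the point at infinity. -/
theorem card_roots_quadratic_add_ite (hF : ringChar F ≠ 2) {α β γ : F}
    (h : ¬(α = 0 ∧ β = 0 ∧ γ = 0)) :
    (#{s | γ * (s * s) + β * s + α = 0} : ℤ) + (if γ = 0 then 1 else 0)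
      = quadraticChar F (discrim γ β α) + 1 := by
  by_cases hγ : γ = 0
  · subst hγ
    by_cases hβ : β = 0
    · subst hβ
      have hα : α ≠ 0 := by tauto
      simp [hα, discrim]
    · have hroot : ({s | 0 * (s * s) + β * s + α = 0} : Finset F) = {-α / β} := by
        ext s; simp only [mem_filter, mem_univ, true_and, mem_singleton]; field_simp
        constructor <;> intro h <;> linear_combination h
      rw [hroot, card_singleton, if_pos rfl, discrim, mul_zero, zero_mul, sub_zero,
        quadraticChar_sq_one' hβ]
      norm_num
  · rw [card_roots_quadratic hF hγ, if_neg hγ, add_zero]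

end QuadraticCount

namespace AddChar

variable {F : Type*} [Field F] [Fintype F] [DecidableEq F] {ψ : AddChar F ℂ}

theorem sum_mul_left_eq_ite (hψ : ψ.IsPrimitive) (t : F) :
    ∑ a, ψ (t * a) = if t = 0 then (Fintype.card F : ℂ) else 0 := by
  simpa [mul_comm] using sum_mulShift t hψ

theorem sum_linear_form_eq_ite (hψ : ψ.IsPrimitive) (α β γ : F) :
    ∑ a, ∑ b, ∑ c, ψ (α * a + β * b + γ * c)
      = if α = 0 ∧ β = 0 ∧ γ = 0 then (Fintype.card F : ℂ) ^ 3 else 0 := by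
  simp only [map_add_eq_mul, ← mul_sum, ← sum_mul, sum_mul_left_eq_ite hψ]
  split_ifs <;> simp_all [pow_succ]

theorem sum_singular_fiber_zero (hψ : ψ.IsPrimitive) (α β γ : F) :
    ∑ b, ∑ c, (if 0 * c = b * b then ψ (α * 0 + β * b + γ * c) else 0)
      = if γ = 0 then (Fintype.card F : ℂ) else 0 := by
  simp [eq_comm (a := (0 : F)), sum_mul_left_eq_ite hψ]

theorem sum_singular_fiber_of_ne_zero {a : F} (ha : a ≠ 0) (α β γ : F) :
    ∑ b, ∑ c, (if a * c = b * b then ψ (α * a + β * b + γ * c) else 0)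
      = ∑ s, ψ (a * (γ * (s * s) + β * s + α)) := by
  have hc (b : F) : ∀ c, a * c = b * b ↔ c = b * b / a := fun c => by
    rw [eq_div_iff ha, mul_comm]
  simp_rw [hc, sum_ite_eq']
  simp only [mem_univ, if_true]
  refine Fintype.sum_equiv (Equiv.mulLeft₀ a ha).symm _ _ fun b => ?_
  congr 1
  simp only [Equiv.mulLeft₀_symm_apply]
  field_simp
  ring

theorem sum_singular (hψ : ψ.IsPrimitive) (α β γ : F) :
    ∑ a, ∑ b, ∑ c, (if a * c = b * b then ψ (α * a + β * b + γ * c) else 0)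
      = Fintype.card F * ((#{s | γ * (s * s) + β * s + α = 0} : ℂ)
          + (if γ = 0 then 1 else 0) - 1) := by
  rw [← add_sum_erase _ _ (mem_univ 0), sum_singular_fiber_zero hψ,
    sum_congr rfl fun a ha => sum_singular_fiber_of_ne_zero (ne_of_mem_erase ha) α β γ, sum_comm]
  have hfiber (s : F) : ∑ a ∈ univ.erase 0, ψ (a * (γ * (s * s) + β * s + α))
      = (if γ * (s * s) + β * s + α = 0 then (Fintype.card F : ℂ) else 0) - 1 := by
    rw [sum_erase_eq_sub (mem_univ 0), ← sum_mul_left_eq_ite hψ]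
    simp [mul_comm]
  simp_rw [hfiber, sum_sub_distrib, sum_ite, sum_const_zero, sum_const, card_univ]
  simp only [nsmul_eq_mul, add_zero, mul_one]
  split_ifs <;> ring

theorem sum_nonsingular (hψ : ψ.IsPrimitive) (hF : ringChar F ≠ 2) (α β γ : F) :
    ∑ a, ∑ b, ∑ c, (if a * c - b * b ≠ 0 then ψ (α * a + β * b + γ * c) else 0)
      = if α = 0 ∧ β = 0 ∧ γ = 0 then (Fintype.card F : ℂ) ^ 2 * (Fintype.card F - 1)
        else -((quadraticChar F (discrim γ β α) : ℂ) * Fintype.card F) := by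
  have hsplit (a b c : F) : (if a * c - b * b ≠ 0 then ψ (α * a + β * b + γ * c) else 0)
      = ψ (α * a + β * b + γ * c) - if a * c = b * b then ψ (α * a + β * b + γ * c) else 0 := by
    split_ifs <;> simp_all [sub_eq_zero]
  simp_rw [hsplit, sum_sub_distrib, sum_linear_form_eq_ite hψ, sum_singular hψ]
  by_cases h : α = 0 ∧ β = 0 ∧ γ = 0
  · obtain ⟨rfl, rfl, rfl⟩ := h
    simp only [and_self, if_true, zero_mul, add_zero, filter_true, card_univ, add_sub_cancel_right]
    ring
  · have hcount : (#{s | γ * (s * s) + β * s + α = 0} : ℂ) + (if γ = 0 then 1 else 0)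
        = quadraticChar F (discrim γ β α) + 1 := by
      exact_mod_cast card_roots_quadratic_add_ite hF h
    simp only [if_neg h, add_sub_assoc, hcount]
    ring

theorem sum_nonsingular_symm_trace (hψ : ψ.IsPrimitive) (hF : ringChar F ≠ 2)
    {N : Matrix (Fin 2) (Fin 2) F} (hN : N.IsSymm) :
    ∑ a, ∑ b, ∑ c, (if (!![a, b; b, c]).det ≠ 0 then ψ (trace (!![a, b; b, c] * N)) else 0)
      = if N = 0 then (Fintype.card F : ℂ) ^ 2 * (Fintype.card F - 1)
        else -((quadraticChar F (-N.det) : ℂ) * Fintype.card F) := by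
  have h2 : (2 : F) ≠ 0 := Ring.two_ne_zero hF
  have hzero : N = 0 ↔ N 0 0 = 0 ∧ 2 * N 0 1 = 0 ∧ N 1 1 = 0 := by
    rw [← Matrix.ext_iff]
    simp only [Matrix.zero_apply, Fin.forall_fin_two, ← hN.apply 0 1, mul_eq_zero, h2, false_or]
    tauto
  have hdiscrim : discrim (N 1 1) (2 * N 0 1) (N 0 0) = 2 ^ 2 * -N.det := by
    rw [discrim, det_fin_two, ← hN.apply 0 1]
    ring
  simp_rw [det_fin_two_of, trace_fin_two_mul_of_isSymm _ _ _ hN, sum_nonsingular hψ hF, hzero,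
    hdiscrim, map_mul, quadraticChar_sq_one' h2, one_mul]

end AddChar

section RankTwoGaussSum

variable {p : ℕ} [Fact p.Prime]

theorem rankTwoGaussSum_eq_sum (u : ℤ) (lam : Matrix (Fin 2) (Fin 2) (ZMod p)) :
    rankTwoGaussSum p u lam = ∑ a, ∑ b, ∑ c, if (!![a, b; b, c]).det ≠ 0 then
      ZMod.stdAddChar (trace (!![a, b; b, c] * (lam * diagonal ![(u : ZMod p), 1] * lamᵀ)))
      else 0 := by
  set N := lam * diagonal ![(u : ZMod p), 1] * lamᵀ
  rw [rankTwoGaussSum, ← sum_ite_isSymm_fin_two fun x =>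
    if x.det ≠ 0 then ZMod.stdAddChar (trace (x * N)) else 0]
  have hrank (y : Matrix (Fin 2) (Fin 2) (ZMod p)) : y.rank = 2 ↔ y.det ≠ 0 := by
    simpa using rank_eq_card_iff_det_ne_zero y
  have htrace (y : Matrix (Fin 2) (Fin 2) (ZMod p)) :
      trace (diagonal ![(u : ZMod p), 1] * lamᵀ * y * lam) = trace (y * N) := by
    rw [trace_mul_comm, ← Matrix.mul_assoc, ← Matrix.mul_assoc, trace_mul_comm]
  refine Fintype.sum_equiv of _ _ fun x => ?_
  simp only [ite_and, hrank, htrace, ZMod.stdAddChar_apply, ZMod.toCircle_apply]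

theorem rankTwoGaussSum_eq_ite (hp : p ≠ 2) (u : ℤ) (lam : Matrix (Fin 2) (Fin 2) (ZMod p)) :
    rankTwoGaussSum p u lam = if lam * diagonal ![(u : ZMod p), 1] * lamᵀ = 0
      then (p : ℂ) ^ 2 * ((p : ℂ) - 1)
      else -((quadraticChar (ZMod p) (-u * lam.det ^ 2) : ℂ) * p) := by
  have hN : (lam * diagonal ![(u : ZMod p), 1] * lamᵀ).IsSymm := by
    simp [IsSymm, transpose_mul, Matrix.mul_assoc]
  have hdet : -(lam * diagonal ![(u : ZMod p), 1] * lamᵀ).det = -u * lam.det ^ 2 := by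
    rw [det_mul, det_mul, det_transpose, det_diagonal, Fin.prod_univ_two, cons_val_zero,
      cons_val_one, cons_val_zero]
    ring
  have hchar : ringChar (ZMod p) ≠ 2 := by rwa [ZMod.ringChar_zmod_n]
  rw [rankTwoGaussSum_eq_sum,
    AddChar.sum_nonsingular_symm_trace (ZMod.isPrimitive_stdAddChar p) hchar hN, ZMod.card, hdet]

end RankTwoGaussSum

/-- Values of the rank-two Gauss sum `G₂(λ)` for `M = diag(u,1)`,
`p` an odd prime, `p ∤ u`. -/
theorem statement_9 (p : ℕ) [Fact p.Prime] (hodd : p ≠ 2)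
    (u : ℤ) (hu : ¬ (p : ℤ) ∣ u)
    (lam : Matrix (Fin 2) (Fin 2) (ZMod p)) :
    (lam = 0 → rankTwoGaussSum p u lam = (p : ℂ) ^ 2 * ((p : ℂ) - 1)) ∧
    (lam.rank = 2 →
      rankTwoGaussSum p u lam = -(((legendreSym p (-u) : ℤ) : ℂ) * (p : ℂ))) ∧
    (lam.rank = 1 → ∀ t : ZMod p, (∀ i, lam i 1 = t * lam i 0) →
      (u : ZMod p) + t ^ 2 = 0 →
      rankTwoGaussSum p u lam = (p : ℂ) ^ 2 * ((p : ℂ) - 1)) ∧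
    (lam.rank = 1 →
      ((∃ t : ZMod p, (∀ i, lam i 1 = t * lam i 0) ∧ (u : ZMod p) + t ^ 2 ≠ 0)
        ∨ (∀ i, lam i 0 = 0)) →
      rankTwoGaussSum p u lam = 0) := by
  have hu' : (u : ZMod p) ≠ 0 := fun h => hu ((ZMod.intCast_zmod_eq_zero_iff_dvd u p).mp h)
  refine ⟨?_, fun h => ?_, fun _ t ht hut => ?_, fun h hcase => ?_⟩
  · rintro rfl
    simp [rankTwoGaussSum_eq_ite hodd]
  · have hdet : lam.det ≠ 0 := (rank_eq_card_iff_det_ne_zero lam).mp (by simpa using h)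
    have hN : lam * diagonal ![(u : ZMod p), 1] * lamᵀ ≠ 0 := fun h0 => by
      simpa [hdet, hu'] using congrArg det h0
    rw [rankTwoGaussSum_eq_ite hodd, if_neg hN, map_mul, quadraticChar_sq_one' hdet]
    simp [legendreSym]
  · rw [rankTwoGaussSum_eq_ite hodd, if_pos (by rw [mul_diagonal_mul_transpose_of_col_eq ht, hut,
      zero_smul])]
  · have hdet : lam.det = 0 := by
      by_contra hdet
      simpa [h] using (rank_eq_card_iff_det_ne_zero lam).mpr hdet
    have hN : lam * diagonal ![(u : ZMod p), 1] * lamᵀ ≠ 0 := fun h0 => by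
      simp [eq_zero_of_mul_diagonal_mul_transpose_eq_zero hcase h0] at h
    rw [rankTwoGaussSum_eq_ite hodd, if_neg hN, hdet]
    simp
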